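/- arXiv:1905.12233 — 3 statements merged into one kernel-verified Lean document; each statement's English description precedes it below -/
import Mathlib

section
/- Let G be a finite simple graph with vertex set V, edge set E, and minimum degree at least 2, let F ⊆ V, let k be a natural number, and let D be a natural number with deg(v) ≤ D for every v ∈ V \ F. If k·D < Σ_{v∈F} (deg(v) − 2), then there is no set S ⊆ V \ F with |S| ≤ k such that the induced subgraph G[V \ S] is acyclic. -/
/-!
Put `A = V \ S`. Counting degrees over `A` gives `Σ_{v∈A} deg v = 2·e(G[A]) + e(A, S)`. Since
`G[A]` is a forest, `e(G[A]) ≤ |A|`, and every edge between `A` and `S` is counted by a degree in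
`S`, so `Σ_{v∈A} (deg v − 2) ≤ Σ_{u∈S} deg u ≤ k·D`. As `F ⊆ A` and `deg v − 2 ≥ 0` everywhere,
the left side is at least `Σ_{v∈F} (deg v − 2)`.
-/

open Finset

namespace SimpleGraph

variable {V : Type*}

theorem IsAcyclic.card_edgeFinset_le [Fintype V] {G : SimpleGraph V} [Fintype G.edgeSet]
    (hG : G.IsAcyclic) : #G.edgeFinset ≤ Fintype.card V := by
  classical
  cases isEmpty_or_nonempty V
  · simp [Subsingleton.elim G ⊥]
  obtain ⟨T, hGT, -, hT⟩ := connected_top.exists_isTree_le_of_le_of_isAcyclic le_top hG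
  calc #G.edgeFinset ≤ #T.edgeFinset := card_le_card (edgeFinset_mono hGT)
    _ ≤ Fintype.card V := hT.card_edgeFinset ▸ Nat.le_succ _

variable (G : SimpleGraph V) [DecidableRel G.Adj]

theorem degree_induce_eq_card_filter_adj (A : Finset V) (v : (A : Set V)) :
    (G.induce A).degree v = #{w ∈ A | G.Adj v w} := by
  rw [← card_neighborFinset_eq_degree]
  refine card_bij (fun w _ ↦ (w : V)) (fun w hw ↦ ?_) (fun _ _ _ _ ↦ Subtype.ext) fun w hw ↦ ?_
  · simpa using And.intro w.2 hw
  · simp only [mem_filter] at hw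
    exact ⟨⟨w, hw.1⟩, by simpa using hw.2, rfl⟩

theorem sum_card_filter_adj_eq_two_mul_card_edgeFinset_induce (A : Finset V) :
    ∑ v ∈ A, #{w ∈ A | G.Adj v w} = 2 * #(G.induce A).edgeFinset := by
  rw [← sum_degrees_eq_twice_card_edges, ← A.sum_coe_sort]
  exact Fintype.sum_congr _ _ fun v ↦ (G.degree_induce_eq_card_filter_adj A v).symm

variable [Fintype V] [DecidableEq V]

theorem sum_degree_le_two_mul_card_edgeFinset_induce_add (A : Finset V) :
    ∑ v ∈ A, G.degree v ≤ 2 * #(G.induce A).edgeFinset + ∑ u ∈ Aᶜ, G.degree u := by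
  have hsplit (v : V) : G.degree v = #{w ∈ A | G.Adj v w} + #{w ∈ Aᶜ | G.Adj v w} := by
    rw [← card_neighborFinset_eq_degree, neighborFinset_eq_filter, ← card_union_of_disjoint
      (disjoint_filter_filter disjoint_compl_right), ← filter_union, union_compl]
  have hcross : ∑ v ∈ A, #{w ∈ Aᶜ | G.Adj v w} ≤ ∑ u ∈ Aᶜ, G.degree u := by
    calc ∑ v ∈ A, #{w ∈ Aᶜ | G.Adj v w} = ∑ u ∈ Aᶜ, #{v ∈ A | G.Adj v u} :=
          sum_card_bipartiteAbove_eq_sum_card_bipartiteBelow _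
      _ ≤ ∑ u ∈ Aᶜ, G.degree u := sum_le_sum fun u _ ↦ ?_
    rw [← card_neighborFinset_eq_degree]
    exact card_le_card fun w hw ↦ (G.mem_neighborFinset u w).2 (mem_filter.1 hw).2.symm
  rw [← G.sum_card_filter_adj_eq_two_mul_card_edgeFinset_induce, sum_congr rfl fun v _ ↦ hsplit v,
    sum_add_distrib]
  exact Nat.add_le_add_left hcross _

theorem sum_degree_sub_two_le_of_isAcyclic_induce (A : Finset V) (hA : (G.induce A).IsAcyclic) :
    ∑ v ∈ A, ((G.degree v : ℤ) - 2) ≤ ∑ u ∈ Aᶜ, (G.degree u : ℤ) := by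
  have hforest : #(G.induce A).edgeFinset ≤ #A := by
    simpa using hA.card_edgeFinset_le
  have := G.sum_degree_le_two_mul_card_edgeFinset_induce_add A
  rw [sum_sub_distrib, sum_const, nsmul_eq_mul]
  push_cast [← Nat.cast_sum]
  omega

end SimpleGraph

/-- If `G` is a finite simple graph with minimum degree at least 2,
`F ⊆ V`, and `deg v ≤ D` for all `v ∉ F`, and `k·D < Σ_{v∈F} (deg v − 2)`, then
there is no feedback vertex set `S ⊆ V \ F` of size at most `k`. -/
theorem stmt0 {V : Type*} [Fintype V] [DecidableEq V]
    (G : SimpleGraph V) [DecidableRel G.Adj]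
    (hmin : ∀ v : V, 2 ≤ G.degree v)
    (F : Finset V) (k D : ℕ)
    (hD : ∀ v : V, v ∉ F → G.degree v ≤ D)
    (hprune : (k : ℤ) * D < ∑ v ∈ F, ((G.degree v : ℤ) - 2)) :
    ¬ ∃ S : Finset V, (∀ v ∈ S, v ∉ F) ∧ S.card ≤ k ∧
      (G.induce ((↑S : Set V)ᶜ)).IsAcyclic := by
  rintro ⟨S, hSF, hSk, hacyc⟩
  rw [← coe_compl] at hacyc
  have hFS : F ⊆ Sᶜ := fun v hv ↦ mem_compl.2 fun hvS ↦ hSF v hvS hv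
  have hS : ∑ u ∈ S, (G.degree u : ℤ) ≤ k * D :=
    calc ∑ u ∈ S, (G.degree u : ℤ) ≤ ∑ _u ∈ S, (D : ℤ) :=
          sum_le_sum fun u hu ↦ mod_cast hD u (hSF u hu)
      _ = #S * D := by rw [sum_const, nsmul_eq_mul]
      _ ≤ k * D := by gcongr
  have hF : ∑ v ∈ F, ((G.degree v : ℤ) - 2) ≤ ∑ u ∈ S, (G.degree u : ℤ) :=
    calc ∑ v ∈ F, ((G.degree v : ℤ) - 2) ≤ ∑ v ∈ Sᶜ, ((G.degree v : ℤ) - 2) :=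
          sum_le_sum_of_subset_of_nonneg hFS fun v _ _ ↦ sub_nonneg.2 (mod_cast hmin v)
      _ ≤ ∑ u ∈ Sᶜᶜ, (G.degree u : ℤ) := G.sum_degree_sub_two_le_of_isAcyclic_induce _ hacyc
      _ = ∑ u ∈ S, (G.degree u : ℤ) := by rw [compl_compl]
  linarith
end

section
/- Let α = 0.922863 and let β be the measure-and-conquer parameter function. For every integer D ≥ 5 and every finite list d = (d_1, …, d_f) of integers with 0 ≤ f ≤ D − 1 and d_i ≥ 3 for all i, it holds that Δ2(D, d) ≥ Δ2(D−1, d). -/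
/-- The measure-and-conquer parameter function `β`. -/
noncomputable def mcBeta : ℕ → ℝ
  | 0 => 0
  | 1 => 0
  | 2 => 0
  | 3 => 0.114038
  | 4 => 0.186479
  | 5 => 0.238143
  | 6 => 0.277239
  | 7 => 0.308030
  | 8 => 0.332974
  | 9 => 0.353536
  | 10 => 0.370540
  | 11 => 0.384771
  | 12 => 0.396884
  | 13 => 0.408715
  | 14 => 0.418855
  | 15 => 0.427643
  | 16 => 0.435333
  | 17 => 0.442118
  | 18 => 0.448149
  | 19 => 0.453544
  | 20 => 0.458401
  | 21 => 0.462794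
  | 22 => 0.466788
  | 23 => 0.470435
  | 24 => 0.473778
  | 25 => 0.476853
  | 26 => 0.479691
  | 27 => 0.482320
  | 28 => 0.484760
  | 29 => 0.487032
  | _ => 0.489153

/-- `Δ1(D, d) = 1 − f·α/D + Σ_{i=1}^f (β_{d_i} − β_{d_i−1})` where `f` is the
length of the list `d`. -/
noncomputable def Delta1 (α : ℝ) (β : ℕ → ℝ) (D : ℕ) (d : List ℕ) : ℝ :=
  1 - (d.length : ℝ) * α / D + (d.map (fun x => β x - β (x - 1))).sum

/-- `Δ2(D, d) = α − 2α/D + Σ_{i=1}^f β_{d_i} − β_{d'}` where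
`d' = D + Σ_{i=1}^f (d_i − 2)`. -/
noncomputable def Delta2 (α : ℝ) (β : ℕ → ℝ) (D : ℕ) (d : List ℕ) : ℝ :=
  α - 2 * α / D + (d.map β).sum - β (D + (d.map (fun x => x - 2)).sum)

lemma mcBeta_of_le {n : ℕ} (h : 30 ≤ n) : mcBeta n = 0.489153 := by
  obtain ⟨k, rfl⟩ := Nat.exists_eq_add_of_le h
  rw [Nat.add_comm]
  rfl

lemma mcBeta_sub_pred_le {n : ℕ} (h : 5 ≤ n) :
    mcBeta n - mcBeta (n - 1) ≤ 2 * 0.922863 / ((n : ℝ) * ((n : ℝ) - 1)) := by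
  rcases le_or_gt n 30 with h30 | h30
  · interval_cases n <;> norm_num [mcBeta]
  · have hn : (1 : ℝ) < n := by exact_mod_cast (by omega : 1 < n)
    rw [mcBeta_of_le h30.le, mcBeta_of_le (by omega : 30 ≤ n - 1), sub_self]
    exact div_nonneg (by norm_num) (mul_nonneg (by linarith) (by linarith))

lemma div_mul_sub_one_anti {c m n : ℝ} (hc : 0 ≤ c) (hm : 1 < m) (hmn : m ≤ n) :
    c / (n * (n - 1)) ≤ c / (m * (m - 1)) :=
  div_le_div_of_nonneg_left hc (by nlinarith) (by nlinarith)

/- Both `Δ2(D, d)` and `Δ2(D-1, d)` evaluate `β` at consecutive arguments `n - 1`, `n` with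
`n = D + Σ (d_i - 2) ≥ D`, so the difference is `2α/(D(D-1)) - (β_n - β_{n-1})`. -/
theorem Delta2_pred_le {α : ℝ} {β : ℕ → ℝ} {D : ℕ} (hα : 0 ≤ α) (hD : 2 ≤ D)
    (hβ : ∀ n, D ≤ n → β n - β (n - 1) ≤ 2 * α / ((n : ℝ) * ((n : ℝ) - 1))) (d : List ℕ) :
    Delta2 α β (D - 1) d ≤ Delta2 α β D d := by
  unfold Delta2
  set n := D + (d.map (fun x => x - 2)).sum
  have hDn : D ≤ n := Nat.le_add_right _ _
  rw [show D - 1 + (d.map (fun x => x - 2)).sum = n - 1 by omega,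
    Nat.cast_sub (by omega : 1 ≤ D), Nat.cast_one]
  have hD1 : (1 : ℝ) < D := by exact_mod_cast hD
  have hincr := hβ n hDn
  have hanti := div_mul_sub_one_anti (by positivity : 0 ≤ 2 * α) hD1
    (by exact_mod_cast hDn : (D : ℝ) ≤ n)
  have htelescope : 2 * α / ((D : ℝ) * ((D : ℝ) - 1)) = 2 * α / ((D : ℝ) - 1) - 2 * α / D := by
    field_simp [(by linarith : (D : ℝ) - 1 ≠ 0)]
    ring
  linarith

theorem stmt13_general (D : ℕ) (hD : 5 ≤ D) (d : List ℕ) :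
    Delta2 0.922863 mcBeta (D - 1) d ≤ Delta2 0.922863 mcBeta D d :=
  Delta2_pred_le (by norm_num) (by omega) (fun _ hn => mcBeta_sub_pred_le (by omega)) d

/-- With `α = 0.922863` and the measure-and-conquer `β`, for any
integer `D ≥ 5` and any list `d` with `f ≤ D − 1` and `d_i ≥ 3` for all `i`,
`Δ2(D, d) ≥ Δ2(D−1, d)`. -/
theorem stmt13 (D : ℕ) (hD : 5 ≤ D) (d : List ℕ)
    (hf : d.length ≤ D - 1) (hd : ∀ x ∈ d, 3 ≤ x) :
    Delta2 0.922863 mcBeta (D - 1) d ≤ Delta2 0.922863 mcBeta D d :=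
  stmt13_general D hD d
end

section
/- For every natural number f, it holds that (1/4)·(8/3)^{min(f,4)/4} + (3/8)^{1/2}·(3/2)^{(1−f)/2} ≤ 1, with equality when f = 0 and when f = 4. -/
/-!
Rewrite the second summand as `3/4 · (4/9)^(f/4)`. On `t = f/4 ∈ [0, 1]` the sum
`1/4 · (8/3)^t + 3/4 · (4/9)^t` is a convex combination of exponentials, hence lies below its chord,
and the chord is constant `1` because `1/4 · 8/3 + 3/4 · 4/9 = 1`; this covers `f ≤ 4`, with equality at
the endpoints. For `f ≥ 4` the first summand is frozen at `2/3` while the second decreases from `1/3`.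
-/

open Real

lemma rpow_le_one_add_mul_sub_one {b t : ℝ} (hb : 0 ≤ b) (ht₀ : 0 ≤ t) (ht₁ : t ≤ 1) :
    b ^ t ≤ 1 + t * (b - 1) := by
  simpa using rpow_one_add_le_one_add_mul_self (s := b - 1) (by linarith) ht₀ ht₁

lemma mul_rpow_add_mul_rpow_le_one {a b v w t : ℝ} (ha : 0 ≤ a) (hb : 0 ≤ b) (hv : 0 ≤ v)
    (hw : 0 ≤ w) (hvw : v + w = 1) (hab : v * a + w * b = 1) (ht₀ : 0 ≤ t) (ht₁ : t ≤ 1) :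
    v * a ^ t + w * b ^ t ≤ 1 :=
  calc v * a ^ t + w * b ^ t ≤ v * (1 + t * (a - 1)) + w * (1 + t * (b - 1)) :=
        add_le_add (mul_le_mul_of_nonneg_left (rpow_le_one_add_mul_sub_one ha ht₀ ht₁) hv)
          (mul_le_mul_of_nonneg_left (rpow_le_one_add_mul_sub_one hb ht₀ ht₁) hw)
    _ = 1 := by linear_combination (1 - t) * hvw + t * hab

lemma rpow_half_three_eighths_mul_rpow_eq (x : ℝ) :
    (3 / 8 : ℝ) ^ ((1 : ℝ) / 2) * (3 / 2 : ℝ) ^ ((1 - x) / 2) = 3 / 4 * (4 / 9 : ℝ) ^ (x / 4) := by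
  have h_half : (3 / 8 : ℝ) ^ ((1 : ℝ) / 2) * (3 / 2 : ℝ) ^ ((1 : ℝ) / 2) = 3 / 4 := by
    rw [← mul_rpow (by norm_num) (by norm_num), ← sqrt_eq_rpow,
      show (3 / 8 * (3 / 2) : ℝ) = (3 / 4) ^ 2 by norm_num, sqrt_sq (by norm_num)]
  have h_base : (4 / 9 : ℝ) = (3 / 2 : ℝ) ^ (-2 : ℝ) := by
    rw [rpow_neg (by norm_num), rpow_two]
    norm_num
  rw [h_base, ← rpow_mul (by norm_num), ← h_half, mul_assoc, ← rpow_add (by norm_num)]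
  ring_nf

/-- For every natural number `f`,
`(1/4)·(8/3)^{min(f,4)/4} + (3/8)^{1/2}·(3/2)^{(1−f)/2} ≤ 1`, with equality when
`f = 0` and when `f = 4`. -/
theorem stmt17 (f : ℕ) :
    (1 / 4) * (8 / 3 : ℝ) ^ (((min f 4 : ℕ) : ℝ) / 4)
        + (3 / 8 : ℝ) ^ ((1 : ℝ) / 2) * (3 / 2 : ℝ) ^ (((1 : ℝ) - (f : ℝ)) / 2) ≤ 1 ∧
    (f = 0 ∨ f = 4 →
      (1 / 4) * (8 / 3 : ℝ) ^ (((min f 4 : ℕ) : ℝ) / 4)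
        + (3 / 8 : ℝ) ^ ((1 : ℝ) / 2) * (3 / 2 : ℝ) ^ (((1 : ℝ) - (f : ℝ)) / 2) = 1) := by
  rw [rpow_half_three_eighths_mul_rpow_eq]
  refine ⟨?_, by rintro (rfl | rfl) <;> norm_num⟩
  rcases le_total f 4 with hf | hf
  · have ht : (f : ℝ) / 4 ≤ 1 := by
      rw [div_le_one (by norm_num)]
      exact_mod_cast hf
    rw [min_eq_left hf]
    exact mul_rpow_add_mul_rpow_le_one (by norm_num) (by norm_num) (by norm_num) (by norm_num)
      (by norm_num) (by norm_num) (by positivity) ht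
  · have ht : 1 ≤ (f : ℝ) / 4 := by
      rw [le_div_iff₀ (by norm_num), one_mul]
      exact_mod_cast hf
    have h_tail : (4 / 9 : ℝ) ^ ((f : ℝ) / 4) ≤ 4 / 9 :=
      rpow_le_self_of_le_one (by norm_num) (by norm_num) ht
    rw [min_eq_right hf, Nat.cast_ofNat, div_self four_ne_zero, rpow_one]
    linarith
end
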